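/- For every natural number n ≥ 2, the quantity 2·(4n-5)! · Γ(2) · Γ(n - 3/2) / (Γ(2n-1) · Γ(2n-3) · Γ(n + 1/2)) equals (4/(2n-1)) · C(4n-4, 2n-2). -/
import Mathlib

open Real

theorem degree_type_B (n : ℕ) (hn : 2 ≤ n) :
    2 * (Nat.factorial (4 * n - 5) : ℝ) * Gamma 2 * Gamma ((n : ℝ) - 3 / 2) /
      (Gamma (2 * n - 1) * Gamma (2 * n - 3) * Gamma ((n : ℝ) + 1 / 2)) =
    4 / (2 * (n : ℝ) - 1) * (Nat.choose (4 * n - 4) (2 * n - 2) : ℝ) := by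
  obtain ⟨m, rfl⟩ : ∃ m, n = m + 2 := ⟨n - 2, by omega⟩
  have h5 : 4 * (m + 2) - 5 = 4 * m + 3 := by omega
  have h4 : 4 * (m + 2) - 4 = 4 * m + 4 := by omega
  have h2 : 2 * (m + 2) - 2 = 2 * m + 2 := by omega
  rw [h5, h4, h2]
  have hG2 : Gamma 2 = 1 := Real.Gamma_two
  have hG1 : Gamma (2 * ((m : ℝ) + 2) - 1) = (Nat.factorial (2 * m + 2) : ℝ) := by
    rw [show 2 * ((m : ℝ) + 2) - 1 = ((2 * m + 2 : ℕ) : ℝ) + 1 by push_cast; ring]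
    exact Real.Gamma_nat_eq_factorial _
  have hG3 : Gamma (2 * ((m : ℝ) + 2) - 3) = (Nat.factorial (2 * m) : ℝ) := by
    rw [show 2 * ((m : ℝ) + 2) - 3 = ((2 * m : ℕ) : ℝ) + 1 by push_cast; ring]
    exact Real.Gamma_nat_eq_factorial _
  have hm : (0:ℝ) ≤ m := Nat.cast_nonneg m
  have hGpos : 0 < Gamma (((m : ℝ) + 2) - 3 / 2) := by
    apply Real.Gamma_pos_of_pos; linarith
  have hGa : Gamma (((m : ℝ) + 2) + 1 / 2) =
      ((m : ℝ) + 3 / 2) * (((m : ℝ) + 1 / 2) * Gamma (((m : ℝ) + 2) - 3 / 2)) := by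
    rw [show ((m : ℝ) + 2) + 1 / 2 = ((m : ℝ) + 3 / 2) + 1 by ring,
      Real.Gamma_add_one (by positivity),
      show (m : ℝ) + 3 / 2 = ((m : ℝ) + 1 / 2) + 1 by ring,
      Real.Gamma_add_one (by positivity)]
    ring_nf
  have hch : (Nat.choose (4 * m + 4) (2 * m + 2) : ℝ) *
      (Nat.factorial (2 * m + 2) : ℝ) * (Nat.factorial (2 * m + 2) : ℝ) =
      (Nat.factorial (4 * m + 4) : ℝ) := by
    have h := Nat.choose_mul_factorial_mul_factorial (by omega : 2 * m + 2 ≤ 4 * m + 4)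
    rw [show 4 * m + 4 - (2 * m + 2) = 2 * m + 2 by omega] at h
    exact_mod_cast h
  have hf1 : (Nat.factorial (4 * m + 4) : ℝ) =
      (4 * (m:ℝ) + 4) * (Nat.factorial (4 * m + 3) : ℝ) := by
    rw [show 4 * m + 4 = (4 * m + 3) + 1 by ring, Nat.factorial_succ]; push_cast; ring
  have hf2 : (Nat.factorial (2 * m + 2) : ℝ) =
      (2 * (m:ℝ) + 2) * ((2 * (m:ℝ) + 1) * (Nat.factorial (2 * m) : ℝ)) := by
    rw [show 2 * m + 2 = (2 * m + 1) + 1 by ring, Nat.factorial_succ, Nat.factorial_succ]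
    push_cast; ring
  rw [hf1, hf2] at hch
  set F : ℝ := (Nat.factorial (2 * m) : ℝ) with hF
  set G : ℝ := Gamma (((m : ℝ) + 2) - 3 / 2) with hGdef
  have hFpos : (0:ℝ) < F := by rw [hF]; exact_mod_cast Nat.factorial_pos _
  have h : (Nat.choose (4 * m + 4) (2 * m + 2) : ℝ) *
      ((2 * (m:ℝ) + 2) * (2 * (m:ℝ) + 1) ^ 2 * F ^ 2) =
      2 * (Nat.factorial (4 * m + 3) : ℝ) := by
    have h22 : (2 * (m:ℝ) + 2) ≠ 0 := by positivity
    apply mul_left_cancel₀ h22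
    linear_combination hch
  push_cast
  rw [hG2, hG1, hG3, hGa, hf2]
  have h1 : (0:ℝ) < 2 * (m:ℝ) + 2 := by linarith
  have h2' : (0:ℝ) < 2 * (m:ℝ) + 1 := by linarith
  have h3 : (0:ℝ) < (m:ℝ) + 3 / 2 := by linarith
  have h4' : (0:ℝ) < (m:ℝ) + 1 / 2 := by linarith
  have hd1 : (2 * (m:ℝ) + 2) * ((2 * (m:ℝ) + 1) * F) * F *
      (((m:ℝ) + 3 / 2) * (((m:ℝ) + 1 / 2) * G)) ≠ 0 := by
    exact ne_of_gt (mul_pos (mul_pos (mul_pos h1 (mul_pos h2' hFpos)) hFpos)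
      (mul_pos h3 (mul_pos h4' hGpos)))
  have hd2 : 2 * ((m:ℝ) + 2) - 1 ≠ 0 := by intro h'; nlinarith
  rw [div_mul_eq_mul_div, div_eq_div_iff hd1 hd2]
  linear_combination (-(2 * (m:ℝ) + 3) * G) * h
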